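/- Let G be a group acting on a tree T without inversions, fix a base vertex b of T, let H be a subgroup of G, let v be a vertex of T, and let A and B be nontrivial H-almost invariant subsets of G which are both enclosed by v. Then A∪B, A∩B and the symmetric difference A+B are each H-almost invariant, and each of them that is nontrivial is enclosed by v. -/

import Mathlib

section Defs

variable {G : Type*} [Group G]

/-- `W` is `H`-finite: contained in finitely many left cosets `Hg` of `H` in `G`. -/
def HFinite (H : Subgroup G) (W : Set G) : Prop :=
  ∃ F : Finset G, W ⊆ ⋃ g ∈ F, (· * g) '' (H : Set G)

/-- The left translate `gX` of a subset `X` of `G`. -/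
def leftTr (g : G) (X : Set G) : Set G := (g * ·) '' X

/-- `X` is an `H`-almost invariant subset of `G`: `HX = X` and for every `g` the
symmetric difference of `X` and `Xg` is `H`-finite. -/
def AlmostInv (H : Subgroup G) (X : Set G) : Prop :=
  (∀ h ∈ H, leftTr h X = X) ∧ ∀ g : G, HFinite H (symmDiff X ((· * g) '' X))

/-- `X` is a nontrivial `H`-almost invariant subset of `G`. -/
def NontrivialAI (H : Subgroup G) (X : Set G) : Prop :=
  AlmostInv H X ∧ ¬ HFinite H X ∧ ¬ HFinite H Xᶜ

/-- `Y` crosses the `H`-almost invariant set `X`: none of the four corner sets is `H`-finite. -/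
def Crosses (H : Subgroup G) (X Y : Set G) : Prop :=
  ¬ HFinite H (X ∩ Y) ∧ ¬ HFinite H (X ∩ Yᶜ) ∧ ¬ HFinite H (Xᶜ ∩ Y) ∧ ¬ HFinite H (Xᶜ ∩ Yᶜ)

/-- The coboundary `∂Y` of `Y` with respect to a finite generating set `S`. -/
def bdry (S : Finset G) (Y : Set G) : Set G :=
  {g : G | ∃ s ∈ (S : Set G) ∪ (S : Set G)⁻¹, (g ∈ Y) ≠ (g * s ∈ Y)}

/-- `Y` crosses the `H`-almost invariant set `X` strongly: neither `∂Y ∩ X` nor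
`∂Y ∩ X*` is `H`-finite. -/
def CrossesStrongly (S : Finset G) (H : Subgroup G) (X Y : Set G) : Prop :=
  ¬ HFinite H (bdry S Y ∩ X) ∧ ¬ HFinite H (bdry S Y ∩ Xᶜ)

/-- Two subsets of `G` are nested if one of the four corner sets is empty. -/
def Nested (U V : Set G) : Prop :=
  U ∩ V = ∅ ∨ U ∩ Vᶜ = ∅ ∨ Uᶜ ∩ V = ∅ ∨ Uᶜ ∩ Vᶜ = ∅

/-- The conjugate subgroup `gHg⁻¹`. -/
def conjSub (g : G) (H : Subgroup G) : Subgroup G :=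
  Subgroup.map (MulAut.conj g).toMonoidHom H

/-- A subgroup is two-ended if it contains an infinite cyclic subgroup of finite index. -/
def TwoEnded (H : Subgroup G) : Prop :=
  ∃ z : G, z ∈ H ∧ ¬ IsOfFinOrder z ∧ (Subgroup.zpowers z).relIndex H ≠ 0

/-- `G` is one-ended: `G` is infinite and every almost invariant subset of `G` (over the
trivial group) is finite or cofinite. -/
def OneEnded (G : Type*) [Group G] : Prop :=
  Infinite G ∧ ∀ X : Set G,
    (∀ g : G, (symmDiff X ((· * g) '' X)).Finite) → X.Finite ∨ Xᶜ.Finite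

/-- `G` is finitely presented. -/
def FinitelyPresentedGroup (G : Type*) [Group G] : Prop :=
  ∃ (n : ℕ) (R : Finset (FreeGroup (Fin n))),
    Nonempty (G ≃* FreeGroup (Fin n) ⧸ Subgroup.normalClosure (R : Set (FreeGroup (Fin n))))

/-- `Q(H)`: the collection of subsets of `G` which are almost invariant over some subgroup
commensurable with `H`. -/
def QH (H : Subgroup G) : Set (Set G) :=
  {X : Set G | ∃ K : Subgroup G, Subgroup.Commensurable K H ∧ AlmostInv K X}

/-- The Boolean algebra of subsets of `G` generated by a family `S` of subsets: the smallest
family containing `S` closed under complementation, finite intersections and finite unions. -/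
inductive BoolGen (S : Set (Set G)) : Set G → Prop
  | basic {U : Set G} : U ∈ S → BoolGen S U
  | compl {U : Set G} : BoolGen S U → BoolGen S Uᶜ
  | inter {U V : Set G} : BoolGen S U → BoolGen S V → BoolGen S (U ∩ V)
  | union {U V : Set G} : BoolGen S U → BoolGen S V → BoolGen S (U ∪ V)

/-- A subgroup is virtually free abelian of rank `m` if it has a finite index subgroup
isomorphic to `ℤ^m`. -/
def VirtuallyFreeAbelian (H : Subgroup G) (m : ℕ) : Prop :=
  ∃ K : Subgroup G, K ≤ H ∧ K.relIndex H ≠ 0 ∧ Nonempty (K ≃* Multiplicative (Fin m → ℤ))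

/-- `X` is `n`-canonical with respect to abelian groups: no translate of `X` crosses a
nontrivial almost invariant set over a virtually free abelian subgroup of rank at most `n`. -/
def NCanonicalAb (n : ℕ) (X : Set G) : Prop :=
  ∀ (L : Subgroup G) (m : ℕ), m ≤ n → VirtuallyFreeAbelian L m →
    ∀ Z : Set G, AlmostInv L Z → ¬ HFinite L Z → ¬ HFinite L Zᶜ →
      ∀ g : G, ¬ Crosses L Z (leftTr g X)

variable {ι : Type*}

/-- The set `E` of all translates of the sets `X i` and of their complements. -/
def Translates (X : ι → Set G) : Set (Set G) :=
  {U : Set G | ∃ (g : G) (i : ι), U = leftTr g (X i) ∨ U = (leftTr g (X i))ᶜ}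

/-- `W` is small for the element `U` of `E`: `W` is finite over the group `gHᵢg⁻¹`
associated to `U`. -/
def SmallOver (H : ι → Subgroup G) (X : ι → Set G) (U W : Set G) : Prop :=
  ∃ (g : G) (i : ι), (U = leftTr g (X i) ∨ U = (leftTr g (X i))ᶜ) ∧
    HFinite (conjSub g (H i)) W

/-- The four corner sets `U^{(*)} ∩ V^{(*)}`, indexed by pairs of booleans. -/
def corner (U V : Set G) (p : Bool × Bool) : Set G :=
  (cond p.1 U Uᶜ) ∩ (cond p.2 V Vᶜ)

/-- Condition (*): the family is in good position: whenever two of the four corner sets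
of a pair of elements of `E` are small, one of the corner sets is empty. -/
def GoodPosition (H : ι → Subgroup G) (X : ι → Set G) : Prop :=
  ∀ U ∈ Translates X, ∀ V ∈ Translates X,
    ∀ p q : Bool × Bool, p ≠ q →
      SmallOver H X U (corner U V p) → SmallOver H X U (corner U V q) →
        ∃ r : Bool × Bool, corner U V r = ∅

/-- The relation `U ≤ V` on `E`: `U ∩ V*` is empty or is the only small corner set. -/
def eLE (H : ι → Subgroup G) (X : ι → Set G) (U V : Set G) : Prop :=
  U ∩ Vᶜ = ∅ ∨
    (SmallOver H X U (U ∩ Vᶜ) ∧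
      ∀ p : Bool × Bool, p ≠ (true, false) → ¬ SmallOver H X U (corner U V p))

/-- The relation `U < V` on `E`. -/
def eLT (H : ι → Subgroup G) (X : ι → Set G) (U V : Set G) : Prop :=
  eLE H X U V ∧ U ≠ V

/-- `V` crosses the element `U` of `E`: no corner set is small. -/
def CrossesE (H : ι → Subgroup G) (X : ι → Set G) (U V : Set G) : Prop :=
  ∀ p : Bool × Bool, ¬ SmallOver H X U (corner U V p)

/-- `V` crosses the element `U` of `E` strongly. -/
def StronglyCrossesE (S : Finset G) (H : ι → Subgroup G) (X : ι → Set G) (U V : Set G) : Prop :=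
  ∃ (g : G) (i : ι), (U = leftTr g (X i) ∨ U = (leftTr g (X i))ᶜ) ∧
    ¬ HFinite (conjSub g (H i)) (bdry S V ∩ U) ∧ ¬ HFinite (conjSub g (H i)) (bdry S V ∩ Uᶜ)

/-- The relation on `E` generating the cross-connected components of `Ē`: two elements are
related if they coincide, are complementary, or cross. -/
def ccRelSet (H : ι → Subgroup G) (X : ι → Set G) (U V : Set G) : Prop :=
  U ∈ Translates X ∧ V ∈ Translates X ∧ (U = V ∨ U = Vᶜ ∨ CrossesE H X U V)

/-- `U` and `V` determine the same cross-connected component of `Ē`. -/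
def SameCCC (H : ι → Subgroup G) (X : ι → Set G) (U V : Set G) : Prop :=
  Relation.EqvGen (ccRelSet H X) U V

/-- `V̄` lies between `Ū` and `W̄` in `Ē`: some representatives satisfy `u < v < w`. -/
def BetweenBar (H : ι → Subgroup G) (X : ι → Set G) (U V W : Set G) : Prop :=
  ∃ u v w : Set G, (u = U ∨ u = Uᶜ) ∧ (v = V ∨ v = Vᶜ) ∧ (w = W ∨ w = Wᶜ) ∧
    eLT H X u v ∧ eLT H X v w

/-- The setoid on `E` whose classes are the cross-connected components of `Ē`. -/
def cccSetoid (H : ι → Subgroup G) (X : ι → Set G) :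
    Setoid {U : Set G // U ∈ Translates X} where
  r u v := SameCCC H X u.1 v.1
  iseqv := by
    refine ⟨fun u => Relation.EqvGen.refl _, ?_, ?_⟩
    · exact fun h => Relation.EqvGen.symm _ _ h
    · exact fun h₁ h₂ => Relation.EqvGen.trans _ _ _ h₁ h₂

theorem leftTr_leftTr (g g' : G) (X : Set G) : leftTr g (leftTr g' X) = leftTr (g * g') X := by
  simp only [leftTr, Set.image_image, mul_assoc]

theorem leftTr_compl (g : G) (X : Set G) : leftTr g Xᶜ = (leftTr g X)ᶜ :=
  Set.image_compl_eq (Group.mulLeft_bijective g)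

/-- Left translation as a map from `E` to `E`. -/
def translateE (X : ι → Set G) (g : G) (u : {U : Set G // U ∈ Translates X}) :
    {U : Set G // U ∈ Translates X} :=
  ⟨leftTr g u.1, by
    obtain ⟨g', i, h | h⟩ := u.2
    · exact ⟨g * g', i, Or.inl (by rw [h, leftTr_leftTr])⟩
    · exact ⟨g * g', i, Or.inr (by rw [h, leftTr_compl, leftTr_leftTr])⟩⟩

/-- Betweenness for cross-connected components: `B` lies between the distinct components
`A` and `C` if there are elements enclosed by them with `u < v < w`. -/
def BetweenCCC (H : ι → Subgroup G) (X : ι → Set G)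
    (A B C : Quotient (cccSetoid H X)) : Prop :=
  A ≠ B ∧ B ≠ C ∧ A ≠ C ∧
    ∃ u v w : {U : Set G // U ∈ Translates X},
      Quotient.mk (cccSetoid H X) u = A ∧ Quotient.mk (cccSetoid H X) v = B ∧
        Quotient.mk (cccSetoid H X) w = C ∧
        eLT H X u.1 v.1 ∧ eLT H X v.1 w.1

/-- The half-tree `Y_s` determined by the oriented edge `s = (u,v)`: the vertices
reachable from the terminal vertex `v` after deleting the edge `{u,v}`. -/
def halfTree {V : Type*} (T : SimpleGraph V) (u v : V) : Set V :=
  {w : V | (T.deleteEdges {s(u, v)}).Reachable v w}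

/-- With respect to a base vertex `b`, the subset `Z_s` of `G` determined by the
oriented edge `s = (u,v)`. -/
def Zset {V : Type*} [MulAction G V] (T : SimpleGraph V) (b u v : V) : Set G :=
  {g : G | g • b ∈ halfTree T u v}

/-- The vertex `v` encloses the `H`-almost invariant set `A`: for every edge `s`
oriented towards `v`, either `A ∩ Z_s*` or `A* ∩ Z_s*` is `H`-finite. -/
def Encloses {V : Type*} [MulAction G V] (T : SimpleGraph V) (b : V) (H : Subgroup G)
    (v : V) (A : Set G) : Prop :=
  ∀ u : V, T.Adj u v → HFinite H (A ∩ (Zset T b u v)ᶜ) ∨ HFinite H (Aᶜ ∩ (Zset T b u v)ᶜ)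

end Defs

/-! `A ∪ B`, `A ∩ B` and `A + B` are pointwise Boolean combinations `{x | op (x ∈ A) (x ∈ B)}`.
Such a combination commutes with translations, and its symmetric difference with a translate lies
in the union of those of `A` and `B`; this gives almost invariance. Enclosure by `v` says that on
each `Z_s*` the sets `A` and `B` are constant outside an `H`-finite set, and then so is every
Boolean combination of them. -/

section BoolComb

variable {α β : Type*}

def boolComb (op : Prop → Prop → Prop) (A B : Set α) : Set α :=
  {x | op (x ∈ A) (x ∈ B)}

@[simp]
theorem mem_boolComb {op : Prop → Prop → Prop} {A B : Set α} {x : α} :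
    x ∈ boolComb op A B ↔ op (x ∈ A) (x ∈ B) :=
  Iff.rfl

theorem image_boolComb {f : α → β} (hf : f.Bijective) (op : Prop → Prop → Prop) (A B : Set α) :
    f '' boolComb op A B = boolComb op (f '' A) (f '' B) := by
  ext y
  obtain ⟨x, rfl⟩ := hf.2 y
  simp only [hf.1.mem_set_image, mem_boolComb]

theorem symmDiff_boolComb_subset (op : Prop → Prop → Prop) (A A' B B' : Set α) :
    symmDiff (boolComb op A B) (boolComb op A' B') ⊆ symmDiff A A' ∪ symmDiff B B' := by
  intro x hx
  by_contra hx'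
  have hA : x ∈ A ↔ x ∈ A' := by simp only [Set.mem_union, Set.mem_symmDiff] at hx'; tauto
  have hB : x ∈ B ↔ x ∈ B' := by simp only [Set.mem_union, Set.mem_symmDiff] at hx'; tauto
  simp only [Set.mem_symmDiff, mem_boolComb, hA, hB] at hx
  tauto

end BoolComb

section AlmostInvariance

variable {G : Type*} [Group G] {H : Subgroup G}

theorem HFinite.mono {W W' : Set G} (h : HFinite H W') (hsub : W ⊆ W') : HFinite H W :=
  let ⟨F, hF⟩ := h
  ⟨F, hsub.trans hF⟩

theorem HFinite.union {W₁ W₂ : Set G} (h₁ : HFinite H W₁) (h₂ : HFinite H W₂) :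
    HFinite H (W₁ ∪ W₂) := by
  classical
  obtain ⟨F₁, hF₁⟩ := h₁
  obtain ⟨F₂, hF₂⟩ := h₂
  refine ⟨F₁ ∪ F₂, Set.union_subset ?_ ?_⟩
  · exact hF₁.trans (Set.biUnion_subset_biUnion_left fun g hg => Finset.mem_union_left _ hg)
  · exact hF₂.trans (Set.biUnion_subset_biUnion_left fun g hg => Finset.mem_union_right _ hg)

theorem AlmostInv.boolComb {A B : Set G} (hA : AlmostInv H A) (hB : AlmostInv H B)
    (op : Prop → Prop → Prop) : AlmostInv H (boolComb op A B) := by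
  refine ⟨fun h hh => ?_, fun g => ?_⟩
  · rw [leftTr, image_boolComb (Group.mulLeft_bijective h)]
    exact congrArg₂ (_root_.boolComb op) (hA.1 h hh) (hB.1 h hh)
  · rw [image_boolComb (Group.mulRight_bijective g)]
    exact ((hA.2 g).union (hB.2 g)).mono (symmDiff_boolComb_subset op _ _ _ _)

theorem exists_hfinite_of_hfinite_inter_or {A W : Set G}
    (h : HFinite H (A ∩ W) ∨ HFinite H (Aᶜ ∩ W)) :
    ∃ (a : Prop) (E : Set G), HFinite H E ∧ ∀ x ∈ W, x ∉ E → (x ∈ A ↔ a) := by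
  rcases h with h | h
  · exact ⟨False, A ∩ W, h, fun x hxW hxE => iff_false_intro fun hxA => hxE ⟨hxA, hxW⟩⟩
  · exact ⟨True, Aᶜ ∩ W, h, fun x hxW hxE =>
      iff_true_intro (not_not.1 fun hxA => hxE ⟨hxA, hxW⟩)⟩

theorem hfinite_boolComb_inter_or {A B W : Set G}
    (hA : HFinite H (A ∩ W) ∨ HFinite H (Aᶜ ∩ W))
    (hB : HFinite H (B ∩ W) ∨ HFinite H (Bᶜ ∩ W)) (op : Prop → Prop → Prop) :
    HFinite H (boolComb op A B ∩ W) ∨ HFinite H ((boolComb op A B)ᶜ ∩ W) := by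
  obtain ⟨a, EA, hEA, hA⟩ := exists_hfinite_of_hfinite_inter_or hA
  obtain ⟨b, EB, hEB, hB⟩ := exists_hfinite_of_hfinite_inter_or hB
  have hop : ∀ x ∈ W, x ∉ EA ∪ EB → (x ∈ boolComb op A B ↔ op a b) := fun x hxW hxE => by
    rw [mem_boolComb, propext (hA x hxW fun h => hxE (.inl h)),
      propext (hB x hxW fun h => hxE (.inr h))]
  by_cases hab : op a b
  · refine .inr ((hEA.union hEB).mono fun x ⟨hxC, hxW⟩ => ?_)
    by_contra hxE
    exact hxC ((hop x hxW hxE).2 hab)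
  · refine .inl ((hEA.union hEB).mono fun x ⟨hxC, hxW⟩ => ?_)
    by_contra hxE
    exact hab ((hop x hxW hxE).1 hxC)

theorem Encloses.boolComb {V : Type*} [MulAction G V] {T : SimpleGraph V} {b v : V}
    {A B : Set G} (hA : Encloses T b H v A) (hB : Encloses T b H v B)
    (op : Prop → Prop → Prop) : Encloses T b H v (boolComb op A B) :=
  fun u huv => hfinite_boolComb_inter_or (hA u huv) (hB u huv) op

end AlmostInvariance

theorem stmt18_general {G V : Type*} [Group G] [MulAction G V] (T : SimpleGraph V)
    (b : V) (H : Subgroup G) (v : V) (A B : Set G)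
    (hA : NontrivialAI H A) (hB : NontrivialAI H B)
    (hencA : Encloses T b H v A) (hencB : Encloses T b H v B) :
    AlmostInv H (A ∪ B) ∧ AlmostInv H (A ∩ B) ∧ AlmostInv H (symmDiff A B) ∧
    ((¬ HFinite H (A ∪ B) ∧ ¬ HFinite H (A ∪ B)ᶜ) → Encloses T b H v (A ∪ B)) ∧
    ((¬ HFinite H (A ∩ B) ∧ ¬ HFinite H (A ∩ B)ᶜ) → Encloses T b H v (A ∩ B)) ∧
    ((¬ HFinite H (symmDiff A B) ∧ ¬ HFinite H (symmDiff A B)ᶜ) →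
      Encloses T b H v (symmDiff A B)) := by
  have hunion : A ∪ B = boolComb Or A B := rfl
  have hinter : A ∩ B = boolComb And A B := rfl
  have hsymmDiff : symmDiff A B = boolComb Xor A B := by
    ext x
    simp only [Set.mem_symmDiff, mem_boolComb, Xor]
  rw [hunion, hinter, hsymmDiff]
  exact ⟨hA.1.boolComb hB.1 Or, hA.1.boolComb hB.1 And, hA.1.boolComb hB.1 Xor,
    fun _ => hencA.boolComb hencB Or, fun _ => hencA.boolComb hencB And,
    fun _ => hencA.boolComb hencB Xor⟩

/-- If `A` and `B` are nontrivial `H`-almost invariant sets enclosed by a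
vertex `v` of a `G`-tree, then `A ∪ B`, `A ∩ B` and `A + B` are `H`-almost invariant and,
when nontrivial, enclosed by `v`. -/
theorem stmt18 {G V : Type*} [Group G] [MulAction G V] (T : SimpleGraph V)
    (htree : T.IsTree)
    (hadj : ∀ (g : G) (x y : V), T.Adj x y → T.Adj (g • x) (g • y))
    (hinv : ∀ (g : G) (x y : V), T.Adj x y → ¬(g • x = y ∧ g • y = x))
    (b : V) (H : Subgroup G) (v : V) (A B : Set G)
    (hA : NontrivialAI H A) (hB : NontrivialAI H B)
    (hencA : Encloses T b H v A) (hencB : Encloses T b H v B) :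
    AlmostInv H (A ∪ B) ∧ AlmostInv H (A ∩ B) ∧ AlmostInv H (symmDiff A B) ∧
    ((¬ HFinite H (A ∪ B) ∧ ¬ HFinite H (A ∪ B)ᶜ) → Encloses T b H v (A ∪ B)) ∧
    ((¬ HFinite H (A ∩ B) ∧ ¬ HFinite H (A ∩ B)ᶜ) → Encloses T b H v (A ∩ B)) ∧
    ((¬ HFinite H (symmDiff A B) ∧ ¬ HFinite H (symmDiff A B)ᶜ) →
      Encloses T b H v (symmDiff A B)) :=
  stmt18_general T b H v A B hA hB hencA hencB
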